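/- Let L₁ and L₂ be locally compact Hausdorff spaces and let T : C₀⁺(L₁) → C₀⁺(L₂) be a surjective map satisfying ‖T(f+g)‖ = ‖T(f)+T(g)‖ for all f, g ∈ C₀⁺(L₁). Let f, g ∈ C₀⁺(L₁) and y₀ ∈ L₂. If T(g)(y₀) = ‖T(g)‖ and (T(f)+T(g))(y₀) = ‖T(f)+T(g)‖, then T(f+g)(y₀) = ‖T(f+g)‖ and T(f+g)(y₀) = T(f)(y₀) + T(g)(y₀). -/
import Mathlib

open scoped ZeroAtInfty
open Set Filter ZeroAtInftyContinuousMap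

lemma aux_ev_le_norm {L : Type*} [TopologicalSpace L] (h : C₀(L, ℝ)) (y : L) : h y ≤ ‖h‖ := by
  rw [← ZeroAtInftyContinuousMap.norm_toBCF_eq_norm]
  exact (le_abs_self _).trans (by simpa using h.toBCF.norm_coe_le_norm y)

lemma aux_norm_le {L : Type*} [TopologicalSpace L] {h : C₀(L, ℝ)} {C : ℝ} (hC : 0 ≤ C)
    (H : ∀ y, |h y| ≤ C) : ‖h‖ ≤ C := by
  rw [← ZeroAtInftyContinuousMap.norm_toBCF_eq_norm]
  exact (BoundedContinuousFunction.norm_le hC).mpr (fun y => by simpa using H y)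

lemma aux_bump {L : Type*} [TopologicalSpace L] [LocallyCompactSpace L] [T2Space L]
    {V : Set L} (hV : IsOpen V) {y₀ : L} (hy : y₀ ∈ V) :
    ∃ φ : C₀(L, ℝ), φ y₀ = 1 ∧ (∀ y, 0 ≤ φ y) ∧ (∀ y, φ y ≤ 1) ∧ ∀ y ∉ V, φ y = 0 := by
  obtain ⟨φ, h1, h0, hcs, hIcc⟩ := exists_continuous_one_zero_of_isCompact
    (isCompact_singleton (x := y₀)) hV.isClosed_compl
    (by rw [Set.disjoint_left]; intro a ha; simp only [Set.mem_singleton_iff] at ha; subst ha;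
        simp [hy])
  exact ⟨⟨φ, hcs.is_zero_at_infty⟩, h1 rfl, fun y => (hIcc y).1, fun y => (hIcc y).2,
    fun y hyV => h0 hyV⟩

lemma aux_exists_max {L : Type*} [TopologicalSpace L] (h : C₀(L, ℝ)) (hp : ∀ y, 0 ≤ h y)
    (hn : 0 < ‖h‖) : ∃ z, h z = ‖h‖ := by
  have hti : Filter.Tendsto h (Filter.cocompact L) (nhds 0) := zero_at_infty h
  have hev : ∀ᶠ y in Filter.cocompact L, |h y| < ‖h‖ / 2 := by
    have := hti.eventually (eventually_abs_sub_lt 0 (by linarith : (0:ℝ) < ‖h‖/2))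
    simpa using this
  obtain ⟨K, hK, hKs⟩ := Filter.mem_cocompact'.mp hev
  have hex : ∃ y, ‖h‖ / 2 < h y := by
    by_contra hcon
    push_neg at hcon
    have : ‖h‖ ≤ ‖h‖ / 2 := aux_norm_le (by linarith) (fun y => by
      rw [abs_of_nonneg (hp y)]; exact hcon y)
    linarith
  obtain ⟨y, hy⟩ := hex
  have hyK : y ∈ K := by
    by_contra hyK
    have hmem : y ∈ {y | |h y| < ‖h‖ / 2} := by
      by_contra hc; exact hyK (hKs hc)
    rw [Set.mem_setOf_eq, abs_of_nonneg (hp y)] at hmem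
    linarith
  obtain ⟨z, hzK, hz⟩ := hK.exists_isMaxOn ⟨y, hyK⟩ (h.continuous.continuousOn)
  refine ⟨z, le_antisymm (aux_ev_le_norm h z) (aux_norm_le (hp z) (fun w => ?_))⟩
  rw [abs_of_nonneg (hp w)]
  by_cases hwK : w ∈ K
  · exact hz hwK
  · have : |h w| < ‖h‖ / 2 := by
      by_contra hc; exact hwK (hKs hc)
    rw [abs_of_nonneg (hp w)] at this
    have : h y ≤ h z := hz hyK
    linarith

theorem stmt_15 {L₁ L₂ : Type*}
    [TopologicalSpace L₁] [LocallyCompactSpace L₁] [T2Space L₁]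
    [TopologicalSpace L₂] [LocallyCompactSpace L₂] [T2Space L₂]
    (T : C₀(L₁, ℝ) → C₀(L₂, ℝ))
    (hpos : ∀ f : C₀(L₁, ℝ), (∀ x, 0 ≤ f x) → ∀ y, 0 ≤ T f y)
    (hsurj : ∀ h : C₀(L₂, ℝ), (∀ y, 0 ≤ h y) →
      ∃ f : C₀(L₁, ℝ), (∀ x, 0 ≤ f x) ∧ T f = h)
    (hnorm : ∀ f g : C₀(L₁, ℝ), (∀ x, 0 ≤ f x) → (∀ x, 0 ≤ g x) →
      ‖T (f + g)‖ = ‖T f + T g‖)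
    (f g : C₀(L₁, ℝ)) (hf : ∀ x, 0 ≤ f x) (hg : ∀ x, 0 ≤ g x)
    (y₀ : L₂) (hgy : T g y₀ = ‖T g‖)
    (hfgy : (T f + T g) y₀ = ‖T f + T g‖) :
    T (f + g) y₀ = ‖T (f + g)‖ ∧ T (f + g) y₀ = T f y₀ + T g y₀ := by
  -- Pointwise upper bound lemma: T (a+b) z ≤ T a z + ‖T b‖
  have lemA : ∀ a b : C₀(L₁, ℝ), (∀ x, 0 ≤ a x) → (∀ x, 0 ≤ b x) → ∀ z : L₂,
      T (a + b) z ≤ T a z + ‖T b‖ := by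
    intro a b ha hb z
    have hab : ∀ x, 0 ≤ (a + b) x := fun x => by
      rw [ZeroAtInftyContinuousMap.add_apply]; exact add_nonneg (ha x) (hb x)
    refine le_of_forall_pos_le_add (fun ε hε => ?_)
    set W : Set L₂ := {y | T a y < T a z + ε} with hWdef
    have hWopen : IsOpen W := isOpen_lt (T a).continuous continuous_const
    have hzW : z ∈ W := by simp [hWdef, hε]
    obtain ⟨ψ, hψ1, hψ0, hψle, hψout⟩ := aux_bump hWopen hzW
    set m : ℝ := ‖T a‖ with hmdef
    have hm : 0 ≤ m := norm_nonneg _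
    obtain ⟨w, hw0, hTw⟩ := hsurj (m • ψ) (fun y => by
      rw [ZeroAtInftyContinuousMap.smul_apply]
      exact mul_nonneg hm (hψ0 y))
    have hTwy : ∀ y, T w y = m * ψ y := fun y => by
      rw [hTw, ZeroAtInftyContinuousMap.smul_apply]; rfl
    have haw : ∀ x, 0 ≤ (a + w) x := fun x => by
      rw [ZeroAtInftyContinuousMap.add_apply]; exact add_nonneg (ha x) (hw0 x)
    have step1 : m + T (a + b) z ≤ ‖T (a + b) + T w‖ := by
      have := aux_ev_le_norm (T (a + b) + T w) z
      rw [ZeroAtInftyContinuousMap.add_apply, hTwy z, hψ1, mul_one] at this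
      linarith
    have step2 : ‖T (a + b) + T w‖ = ‖T (a + w) + T b‖ := by
      rw [← hnorm (a + b) w hab hw0, ← hnorm (a + w) b haw hb, add_right_comm]
    have step4 : ‖T (a + w)‖ = ‖T a + T w‖ := hnorm a w ha hw0
    have step5 : ‖T a + T w‖ ≤ m + (T a z + ε) := by
      apply aux_norm_le (by have := hpos a ha z; linarith)
      intro y
      rw [ZeroAtInftyContinuousMap.add_apply,
        abs_of_nonneg (add_nonneg (hpos a ha y) (hpos w hw0 y)), hTwy y]
      by_cases hyW : y ∈ W
      · have h1 : T a y < T a z + ε := hyW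
        have h2 : m * ψ y ≤ m := by
          nlinarith [hψle y, hψ0 y]
        linarith
      · rw [hψout y hyW, mul_zero, add_zero]
        have h1 : T a y ≤ m := aux_ev_le_norm (T a) y
        have := hpos a ha z
        linarith
    have step3 : ‖T (a + w) + T b‖ ≤ ‖T (a + w)‖ + ‖T b‖ := norm_add_le _ _
    linarith
  -- Main argument
  have hab : ∀ x, 0 ≤ (f + g) x := fun x => by
    rw [ZeroAtInftyContinuousMap.add_apply]; exact add_nonneg (hf x) (hg x)
  have hfM : T f y₀ + T g y₀ = ‖T f + T g‖ := by
    rw [← hfgy, ZeroAtInftyContinuousMap.add_apply]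
  have hnfg : ‖T (f + g)‖ = ‖T f + T g‖ := hnorm f g hf hg
  have key : ∀ δ : ℝ, 0 < δ → ‖T f + T g‖ ≤ T (f + g) y₀ + 2 * δ := by
    intro δ hδ
    set V : Set L₂ := {y | T (f + g) y < T (f + g) y₀ + δ} ∩ {y | T f y₀ - δ < T f y}
      with hVdef
    have hVopen : IsOpen V :=
      (isOpen_lt (T (f + g)).continuous continuous_const).inter
        (isOpen_lt continuous_const (T f).continuous)
    have hy₀V : y₀ ∈ V := by
      constructor <;> simp [hδ]
    obtain ⟨φ, hφ1, hφ0, hφle, hφout⟩ := aux_bump hVopen hy₀V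
    set n : ℝ := ‖T (f + g)‖ + 1 with hndef
    have hn0 : 0 < n := by have := norm_nonneg (T (f + g)); linarith
    have hnge : ‖T (f + g)‖ ≤ n := by linarith
    obtain ⟨u, hu0, hTu⟩ := hsurj (n • φ) (fun y => by
      rw [ZeroAtInftyContinuousMap.smul_apply]
      exact mul_nonneg hn0.le (hφ0 y))
    have hTuy : ∀ y, T u y = n * φ y := fun y => by
      rw [hTu, ZeroAtInftyContinuousMap.smul_apply]; rfl
    have hgu : ∀ x, 0 ≤ (g + u) x := fun x => by
      rw [ZeroAtInftyContinuousMap.add_apply]; exact add_nonneg (hg x) (hu0 x)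
    have hgu_pos : ∀ y, 0 ≤ T (g + u) y := hpos _ hgu
    have hgu_norm : ‖T (g + u)‖ = n + ‖T g‖ := by
      rw [hnorm g u hg hu0]
      apply le_antisymm
      · apply aux_norm_le (by have := norm_nonneg (T g); linarith)
        intro y
        rw [ZeroAtInftyContinuousMap.add_apply,
          abs_of_nonneg (add_nonneg (hpos g hg y) (hpos u hu0 y)), hTuy y]
        have h1 : T g y ≤ ‖T g‖ := aux_ev_le_norm (T g) y
        have h2 : n * φ y ≤ n := by nlinarith [hφle y, hφ0 y]
        linarith
      · have := aux_ev_le_norm (T g + T u) y₀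
        rw [ZeroAtInftyContinuousMap.add_apply, hTuy y₀, hφ1, mul_one, hgy] at this
        linarith
    have hgu_norm_pos : 0 < ‖T (g + u)‖ := by
      rw [hgu_norm]; have := norm_nonneg (T g); linarith
    obtain ⟨z, hz⟩ := aux_exists_max (T (g + u)) hgu_pos hgu_norm_pos
    -- locate z in V via lemA
    have hzV : z ∈ V := by
      have hA : T (u + g) z ≤ T u z + ‖T g‖ := lemA u g hu0 hg z
      rw [add_comm u g] at hA
      rw [hz, hgu_norm, hTuy z] at hA
      by_contra hzV
      rw [hφout z hzV, mul_zero] at hA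
      linarith
    have hfz : T f y₀ - δ < T f z := hzV.2
    -- chain of inequalities
    have c1 : T f z + (n + ‖T g‖) ≤ ‖T f + T (g + u)‖ := by
      have := aux_ev_le_norm (T f + T (g + u)) z
      rw [ZeroAtInftyContinuousMap.add_apply, hz, hgu_norm] at this
      linarith
    have c2 : ‖T f + T (g + u)‖ = ‖T (f + g) + T u‖ := by
      rw [← hnorm f (g + u) hf hgu, ← hnorm (f + g) u hab hu0, add_assoc]
    have c3 : ‖T (f + g) + T u‖ ≤ n + (T (f + g) y₀ + δ) := by
      apply aux_norm_le (by have := hpos (f + g) hab y₀; linarith)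
      intro y
      rw [ZeroAtInftyContinuousMap.add_apply,
        abs_of_nonneg (add_nonneg (hpos (f + g) hab y) (hpos u hu0 y)), hTuy y]
      by_cases hyV : y ∈ V
      · have h1 : T (f + g) y < T (f + g) y₀ + δ := hyV.1
        have h2 : n * φ y ≤ n := by nlinarith [hφle y, hφ0 y]
        linarith
      · rw [hφout y hyV, mul_zero, add_zero]
        have h1 : T (f + g) y ≤ ‖T (f + g)‖ := aux_ev_le_norm _ y
        have := hpos (f + g) hab y₀
        linarith
    have : T g y₀ = ‖T g‖ := hgy
    linarith
  have keyM : ‖T f + T g‖ ≤ T (f + g) y₀ := by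
    refine le_of_forall_pos_le_add (fun ε hε => ?_)
    have := key (ε / 2) (by linarith)
    linarith
  have hle : T (f + g) y₀ ≤ ‖T f + T g‖ := (aux_ev_le_norm _ y₀).trans_eq hnfg
  have heq : T (f + g) y₀ = ‖T f + T g‖ := le_antisymm hle keyM
  exact ⟨heq.trans hnfg.symm, heq.trans hfM.symm⟩
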